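/- The function h ↦ β_c(h), where β_c(h) is the unique positive solution of β² = 2·r(tanh(β·h)), is strictly decreasing on [0, ∞). -/

import Mathlib

/-!
`r(y)` is the binary entropy of `(1 + y) / 2`, so it decreases strictly on `[0, 1]`, and
`x ↦ r(tanh x)` decreases strictly on `[0, ∞)`. If `h < h'` but `β_c(h) ≤ β_c(h')`, then
`β_c(h) h < β_c(h') h'`, hence `β_c(h')² = 2 r(tanh(β_c(h') h')) < 2 r(tanh(β_c(h) h)) = β_c(h)²`,
a contradiction.
-/

open Real

/-- The modified binary entropy. -/
noncomputable def modEntropy (y : ℝ) : ℝ :=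
  -((1 - y) / 2 * Real.log ((1 - y) / 2)) - (1 + y) / 2 * Real.log ((1 + y) / 2)

theorem modEntropy_eq_binEntropy (y : ℝ) : modEntropy y = binEntropy ((1 + y) / 2) := by
  rw [modEntropy, binEntropy, log_inv, log_inv, show 1 - (1 + y) / 2 = (1 - y) / 2 by ring]
  ring

theorem modEntropy_strictAntiOn : StrictAntiOn modEntropy (Set.Icc 0 1) := by
  intro x hx y hy hxy
  simp only [modEntropy_eq_binEntropy]
  refine binEntropy_strictAntiOn ?_ ?_ (by linarith)
  · constructor <;> linarith [hx.1, hx.2]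
  · constructor <;> linarith [hy.1, hy.2]

theorem Real.tanh_strictMono : StrictMono tanh := fun a b hab ↦ by
  by_contra! h
  have := artanh_le_artanh (neg_one_lt_tanh b) (tanh_lt_one a) h
  rw [artanh_tanh, artanh_tanh] at this
  exact this.not_gt hab

theorem modEntropy_tanh_strictAntiOn :
    StrictAntiOn (fun x ↦ modEntropy (tanh x)) (Set.Ici 0) := by
  have tanh_mem {x : ℝ} (hx : 0 ≤ x) : tanh x ∈ Set.Icc 0 1 :=
    ⟨tanh_zero ▸ tanh_strictMono.monotone hx, (tanh_lt_one x).le⟩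
  exact fun x hx y hy hxy ↦
    modEntropy_strictAntiOn (tanh_mem hx) (tanh_mem hy) (tanh_strictMono hxy)

/-- The map `h ↦ β_c(h)`, where `β_c(h)` is the unique positive solution of
`β² = 2 r(tanh(βh))`, is strictly decreasing on `[0, ∞)`. -/
theorem critical_beta_strictAnti (βc : ℝ → ℝ)
    (hβc : ∀ h : ℝ, 0 ≤ h →
      0 < βc h ∧ (βc h) ^ 2 = 2 * modEntropy (Real.tanh (βc h * h))) :
    StrictAntiOn βc (Set.Ici (0 : ℝ)) := by
  intro a ha b hb hab
  obtain ⟨hpos, hβa⟩ := hβc a ha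
  obtain ⟨-, hβb⟩ := hβc b hb
  by_contra! hle
  have harg : βc a * a < βc b * b :=
    mul_lt_mul' hle hab (Set.mem_Ici.mp ha) (hpos.trans_le hle)
  have hent : modEntropy (tanh (βc b * b)) < modEntropy (tanh (βc a * a)) :=
    modEntropy_tanh_strictAntiOn (mul_nonneg hpos.le ha)
      (mul_nonneg (hpos.le.trans hle) (ha.trans hab.le)) harg
  have hsq : βc b ^ 2 < βc a ^ 2 := by rw [hβa, hβb]; linarith
  exact hsq.not_ge (pow_le_pow_left₀ hpos.le hle 2)
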